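/- For integers n ≥ 3 and t ≥ 1, the geodesic distance (Wiener index) of the Cayley tree C(t,n) equals n(n−1)^{t−1} + (n(t−1)(n−1)^{t+1} − n(n−1)^{t−1} + n)/(n−2)² + (n((n−2)t − n)(n−1)^{2t} + 2n(n−1)^{t+1})/(n−2)³ + (n(n−1)/(n−2)³)·(((n−2)t − 1)(n−1)^{2t} − ((n−2)t − 2)(n−1)^t − 1). -/

import Mathlib

/-!
Encode a vertex of `C(t,n)` by its path up to the root, a word over `Fin n ⊕ Fin (n-1)`: this
embeds the Cayley tree into the tree of all words (the parent of `a :: l` is `l`) as a subtree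
closed under taking parents. In such a subtree the distance between `u` and `v` is
`|u| + |v| - 2 s(u,v)`, where `s` is the length of the longest common suffix (the depth of the
lowest common ancestor); summing over ordered pairs gives
`W = |V| ∑ |u| - ∑ s(u,v)`. For the Cayley tree, these sums reduce to the number `P`, the total
length `L` and the total common prefix length `C` of the words of length `≤ t - 1` over `n - 1`
letters, which satisfy linear recursions in `t` with geometric closed forms
(`P = k P' + 1`, `L = k (L' + P')`, `C = k (C' + P'²)` for `k = n - 1`).
-/

/-- The geodesic distance (Wiener index) of a finite simple graph: the sum of the graph
distances over all unordered pairs of distinct vertices. -/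
noncomputable def wienerIndex {V : Type} [Finite V] (G : SimpleGraph V) : ℕ :=
  letI := Fintype.ofFinite V
  (∑ u : V, ∑ v : V, G.dist u v) / 2

/-- The vertex set of the Cayley tree `C(t,n)`: the root together with all pairs `(i, l)`
where `i ∈ Fin n` records the branch emanating from the root and `l` is a word over
`Fin (n-1)` of length at most `t-1` recording the path within that branch. -/
def CayleyVertex (n t : ℕ) : Type :=
  Unit ⊕ (Fin n × {l : List (Fin (n - 1)) // l.length ≤ t - 1})

instance (k j : ℕ) : Finite {l : List (Fin k) // l.length ≤ j} :=
  (List.finite_length_le (Fin k) j).to_subtype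

instance (n t : ℕ) : Finite (CayleyVertex n t) := by
  unfold CayleyVertex; infer_instance

/-- The Cayley tree `C(t,n)`: the root is adjacent to the first vertex `(i, [])` of each
of the `n` branches, and within a branch adjacency is given by extension by one letter. -/
def cayleyTree (n t : ℕ) : SimpleGraph (CayleyVertex n t) :=
  SimpleGraph.fromRel fun a b =>
    match a, b with
    | Sum.inl _, Sum.inr (_, l) => l.1 = []
    | Sum.inr (i, l), Sum.inr (i', l') => i = i' ∧ ∃ a : Fin (n - 1), l'.1 = a :: l.1
    | _, _ => False

namespace List

section CommonPrefix

variable {α γ : Type*} [DecidableEq α]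

def commonPrefixLength : List α → List α → ℕ
  | a :: l, b :: l' => if a = b then commonPrefixLength l l' + 1 else 0
  | _, _ => 0

@[simp]
theorem commonPrefixLength_nil_left (l : List α) : commonPrefixLength [] l = 0 := by
  cases l <;> rfl

@[simp]
theorem commonPrefixLength_nil_right (l : List α) : commonPrefixLength l [] = 0 := by
  cases l <;> rfl

@[simp]
theorem commonPrefixLength_cons_cons (a b : α) (l l' : List α) :
    commonPrefixLength (a :: l) (b :: l') =
      if a = b then commonPrefixLength l l' + 1 else 0 :=
  rfl

theorem commonPrefixLength_comm (l l' : List α) :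
    commonPrefixLength l l' = commonPrefixLength l' l := by
  induction l generalizing l' with
  | nil => simp
  | cons a l ih =>
    cases l' with
    | nil => simp
    | cons b l' => simp [ih, eq_comm]

theorem commonPrefixLength_le_length_left (l l' : List α) :
    commonPrefixLength l l' ≤ l.length := by
  induction l generalizing l' with
  | nil => simp
  | cons a l ih =>
    cases l' with
    | nil => simp
    | cons b l' => simp only [commonPrefixLength_cons_cons]; split_ifs <;> simp [ih]

theorem take_commonPrefixLength (l l' : List α) :
    l.take (commonPrefixLength l l') = l'.take (commonPrefixLength l l') := by
  induction l generalizing l' with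
  | nil => simp
  | cons a l ih =>
    cases l' with
    | nil => simp
    | cons b l' =>
      simp only [commonPrefixLength_cons_cons]
      split_ifs with h
      · simp [h, ih]
      · simp

theorem length_le_commonPrefixLength {p l l' : List α} (h : p <+: l) (h' : p <+: l') :
    p.length ≤ commonPrefixLength l l' := by
  induction l generalizing p l' with
  | nil => simp [prefix_nil.mp h]
  | cons a l ih =>
    rcases p with _ | ⟨c, p⟩
    · simp
    cases l' with
    | nil => simp at h'
    | cons b l' =>
      obtain ⟨rfl, hp⟩ := cons_prefix_cons.mp h
      obtain ⟨rfl, hp'⟩ := cons_prefix_cons.mp h'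
      simpa using ih hp hp'

theorem commonPrefixLength_map [DecidableEq γ] {f : α → γ} (hf : Function.Injective f)
    (l l' : List α) : commonPrefixLength (l.map f) (l'.map f) = commonPrefixLength l l' := by
  induction l generalizing l' with
  | nil => simp
  | cons a l ih =>
    cases l' with
    | nil => simp
    | cons b l' => simp [ih, hf.eq_iff]

def commonSuffixLength (l l' : List α) : ℕ :=
  commonPrefixLength l.reverse l'.reverse

@[simp]
theorem commonSuffixLength_nil_left (l : List α) : commonSuffixLength [] l = 0 := by
  simp [commonSuffixLength]

@[simp]
theorem commonSuffixLength_nil_right (l : List α) : commonSuffixLength l [] = 0 := by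
  simp [commonSuffixLength]

@[simp]
theorem commonSuffixLength_reverse (l l' : List α) :
    commonSuffixLength l.reverse l'.reverse = commonPrefixLength l l' := by
  simp [commonSuffixLength]

theorem commonSuffixLength_comm (l l' : List α) :
    commonSuffixLength l l' = commonSuffixLength l' l :=
  commonPrefixLength_comm _ _

theorem commonSuffixLength_le_length_left (l l' : List α) :
    commonSuffixLength l l' ≤ l.length := by
  simpa [commonSuffixLength] using commonPrefixLength_le_length_left l.reverse l'.reverse

theorem commonSuffixLength_le_length_right (l l' : List α) :
    commonSuffixLength l l' ≤ l'.length :=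
  commonSuffixLength_comm l l' ▸ commonSuffixLength_le_length_left l' l

theorem exists_suffix_length_eq_commonSuffixLength (l l' : List α) :
    ∃ s, s <:+ l ∧ s <:+ l' ∧ s.length = commonSuffixLength l l' := by
  refine ⟨(l.reverse.take (commonSuffixLength l l')).reverse, ?_, ?_, ?_⟩
  · exact reverse_prefix.mp (by simpa using take_prefix _ l.reverse)
  · rw [commonSuffixLength, take_commonPrefixLength]
    exact reverse_prefix.mp (by simpa using take_prefix _ l'.reverse)
  · simpa using commonSuffixLength_le_length_left l l'

theorem length_le_commonSuffixLength {s l l' : List α} (h : s <:+ l) (h' : s <:+ l') :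
    s.length ≤ commonSuffixLength l l' := by
  simpa [commonSuffixLength] using
    length_le_commonPrefixLength (reverse_prefix.mpr h) (reverse_prefix.mpr h')

@[simp]
theorem commonSuffixLength_self (l : List α) : commonSuffixLength l l = l.length :=
  (commonSuffixLength_le_length_left l l).antisymm
    (length_le_commonSuffixLength (suffix_refl l) (suffix_refl l))

theorem commonSuffixLength_le_cons (a : α) (l l' : List α) :
    commonSuffixLength l l' ≤ commonSuffixLength (a :: l) l' := by
  obtain ⟨s, hs, hs', hlen⟩ := exists_suffix_length_eq_commonSuffixLength l l'
  exact hlen ▸ length_le_commonSuffixLength (hs.trans (suffix_cons a l)) hs'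

theorem commonSuffixLength_cons_le (a : α) (l l' : List α) :
    commonSuffixLength (a :: l) l' ≤ commonSuffixLength l l' + 1 := by
  obtain ⟨s, hs, hs', hlen⟩ := exists_suffix_length_eq_commonSuffixLength (a :: l) l'
  rw [← hlen]
  rcases suffix_cons_iff.mp hs with rfl | hs
  · simpa using length_le_commonSuffixLength (suffix_refl l) ((suffix_cons a l).trans hs')
  · exact (length_le_commonSuffixLength hs hs').trans (Nat.le_succ _)

@[simp]
theorem commonSuffixLength_append_singleton (a b : α) (l l' : List α) :
    commonSuffixLength (l ++ [a]) (l' ++ [b]) =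
      if a = b then commonSuffixLength l l' + 1 else 0 := by
  simp [commonSuffixLength]

theorem commonSuffixLength_map [DecidableEq γ] {f : α → γ} (hf : Function.Injective f)
    (l l' : List α) : commonSuffixLength (l.map f) (l'.map f) = commonSuffixLength l l' := by
  simp [commonSuffixLength, ← map_reverse, commonPrefixLength_map hf]

end CommonPrefix

section LengthLE

variable {α : Type*}

noncomputable instance fintypeLengthLE [Finite α] (m : ℕ) :
    Fintype {l : List α // l.length ≤ m} :=
  (List.finite_length_le α m).fintype

def lengthLESuccEquiv (α : Type*) (m : ℕ) :
    {l : List α // l.length ≤ m + 1} ≃ Option (α × {l : List α // l.length ≤ m}) where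
  toFun
    | ⟨[], _⟩ => none
    | ⟨a :: l, h⟩ => some (a, ⟨l, Nat.le_of_succ_le_succ h⟩)
  invFun
    | none => ⟨[], Nat.zero_le _⟩
    | some (a, l) => ⟨a :: l.1, Nat.succ_le_succ l.2⟩
  left_inv := by rintro ⟨_ | ⟨a, l⟩, h⟩ <;> rfl
  right_inv := by rintro (_ | ⟨a, l, h⟩) <;> rfl

variable [Fintype α] {M : Type*} [AddCommMonoid M]

theorem sum_lengthLE_zero (g : List α → M) :
    ∑ l : {l : List α // l.length ≤ 0}, g l = g [] :=
  haveI : Subsingleton {l : List α // l.length ≤ 0} :=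
    ⟨fun l l' => Subtype.ext <| by
      rw [length_eq_zero_iff.mp (Nat.le_zero.mp l.2),
        length_eq_zero_iff.mp (Nat.le_zero.mp l'.2)]⟩
  Fintype.sum_subsingleton (fun l : {l : List α // l.length ≤ 0} => g l) ⟨[], le_rfl⟩

theorem sum_lengthLE_succ (m : ℕ) (g : List α → M) :
    ∑ l : {l : List α // l.length ≤ m + 1}, g l =
      g [] + ∑ a, ∑ l : {l : List α // l.length ≤ m}, g (a :: l) := by
  rw [Fintype.sum_equiv (lengthLESuccEquiv α m) _
    (fun o => o.elim (g []) fun p => g (p.1 :: p.2)) (by rintro ⟨_ | ⟨a, l⟩, h⟩ <;> rfl),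
    Fintype.sum_option, Fintype.sum_prod_type]
  rfl

theorem sum_lengthLE_reverse (m : ℕ) (g : List α → M) :
    ∑ l : {l : List α // l.length ≤ m}, g l.1.reverse =
      ∑ l : {l : List α // l.length ≤ m}, g l :=
  Fintype.sum_equiv (reverse_involutive.toPerm.subtypeEquiv fun l => by simp) _ _ fun _ => rfl

theorem card_lengthLE_succ (m : ℕ) :
    Fintype.card {l : List α // l.length ≤ m + 1} =
      1 + Fintype.card α * Fintype.card {l : List α // l.length ≤ m} := by
  rw [Fintype.card_congr (lengthLESuccEquiv α m), Fintype.card_option, Fintype.card_prod,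
    add_comm]

theorem sub_one_mul_card_lengthLE (m : ℕ) :
    ((Fintype.card α : ℚ) - 1) * Fintype.card {l : List α // l.length ≤ m} =
      (Fintype.card α : ℚ) ^ (m + 1) - 1 := by
  induction m with
  | zero => simp [Fintype.card_unique]
  | succ m ih =>
    rw [card_lengthLE_succ]
    push_cast
    linear_combination (Fintype.card α : ℚ) * ih

theorem sub_one_sq_mul_sum_length_lengthLE (m : ℕ) :
    ((Fintype.card α : ℚ) - 1) ^ 2 *
        (∑ l : {l : List α // l.length ≤ m}, l.1.length : ℕ) =
      m * (Fintype.card α : ℚ) ^ (m + 2) - (m + 1) * (Fintype.card α : ℚ) ^ (m + 1)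
        + Fintype.card α := by
  induction m with
  | zero => simp [sum_lengthLE_zero (g := length)]
  | succ m ih =>
    have hP := sub_one_mul_card_lengthLE (α := α) m
    rw [sum_lengthLE_succ (g := length)]
    simp only [length_nil, length_cons, Finset.sum_add_distrib, Finset.sum_const,
      Finset.card_univ, smul_eq_mul, zero_add, mul_one]
    push_cast at ih ⊢
    linear_combination (Fintype.card α : ℚ) * ih +
      (Fintype.card α : ℚ) * ((Fintype.card α : ℚ) - 1) * hP

theorem sub_one_pow_three_mul_sum_commonPrefixLength_lengthLE [DecidableEq α] (m : ℕ) :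
    ((Fintype.card α : ℚ) - 1) ^ 3 * (∑ l : {l : List α // l.length ≤ m},
        ∑ l' : {l : List α // l.length ≤ m}, commonPrefixLength l.1 l'.1 : ℕ) =
      (Fintype.card α : ℚ) ^ (m + 2) * ((Fintype.card α : ℚ) ^ m - 1)
        - 2 * m * (Fintype.card α : ℚ) ^ (m + 1) * ((Fintype.card α : ℚ) - 1)
        + Fintype.card α * ((Fintype.card α : ℚ) ^ m - 1) := by
  induction m with
  | zero =>
    simp [sum_lengthLE_zero (g := fun l : List α => ∑ l' : {l : List α // l.length ≤ 0},
      commonPrefixLength l l'.1)]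
  | succ m ih =>
    have hP := sub_one_mul_card_lengthLE (α := α) m
    rw [sum_lengthLE_succ (g := fun l : List α => ∑ l' : {l : List α // l.length ≤ m + 1},
      commonPrefixLength l l'.1)]
    have hrow (a : α) (l : List α) :
        ∑ l' : {l : List α // l.length ≤ m + 1}, commonPrefixLength (a :: l) l'.1 =
          Fintype.card {l : List α // l.length ≤ m} +
            ∑ l' : {l : List α // l.length ≤ m}, commonPrefixLength l l'.1 := by
      rw [sum_lengthLE_succ (g := commonPrefixLength (a :: l))]
      simp [Finset.sum_add_distrib, Finset.sum_ite_eq, add_comm]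
    simp only [hrow, commonPrefixLength_nil_left, Finset.sum_const_zero, zero_add,
      Finset.sum_add_distrib, Finset.sum_const, Finset.card_univ, smul_eq_mul]
    push_cast at ih ⊢
    linear_combination (Fintype.card α : ℚ) * ih +
      (Fintype.card α : ℚ) * ((Fintype.card α : ℚ) - 1) *
        (((Fintype.card α : ℚ) - 1) * Fintype.card {l : List α // l.length ≤ m} +
          (Fintype.card α : ℚ) ^ (m + 1) - 1) * hP

theorem sum_commonSuffixLength_lengthLE [DecidableEq α] (m : ℕ) :
    ∑ l : {l : List α // l.length ≤ m}, ∑ l' : {l : List α // l.length ≤ m},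
        commonSuffixLength l.1 l'.1 =
      ∑ l : {l : List α // l.length ≤ m}, ∑ l' : {l : List α // l.length ≤ m},
        commonPrefixLength l.1 l'.1 := by
  rw [← sum_lengthLE_reverse (g := fun l => ∑ l' : {l : List α // l.length ≤ m},
    commonSuffixLength l l'.1)]
  refine Finset.sum_congr rfl fun l _ => ?_
  rw [← sum_lengthLE_reverse (g := fun l' => commonSuffixLength l.1.reverse l')]
  simp

end LengthLE

end List

namespace SimpleGraph

variable {β : Type*}

def wordTree (β : Type*) : SimpleGraph (List β) :=
  fromRel fun l l' => ∃ a, l' = a :: l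

theorem wordTree_adj {l l' : List β} :
    (wordTree β).Adj l l' ↔ (∃ a, l' = a :: l) ∨ ∃ a, l = a :: l' := by
  refine ⟨fun h => ((fromRel_adj _ _ _).mp h).2, fun h => (fromRel_adj _ _ _).mpr ⟨?_, h⟩⟩
  rintro rfl
  rcases h with ⟨a, h⟩ | ⟨a, h⟩ <;> exact List.cons_ne_self a l h.symm

variable {V : Type*} {G : SimpleGraph V}

theorem exists_walk_of_suffix (f : G ↪g wordTree β)
    (hf : ∀ u a l, f u = a :: l → ∃ w, f w = l) (u : V) {s : List β} (hs : s <:+ f u) :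
    ∃ (w : V) (p : G.Walk u w), f w = s ∧ p.length = (f u).length - s.length := by
  generalize hl : f u = l at hs
  induction l generalizing u with
  | nil => exact ⟨u, .nil, by simp_all⟩
  | cons a l ih =>
    rcases List.suffix_cons_iff.mp hs with rfl | hs
    · exact ⟨u, .nil, hl, by simp⟩
    obtain ⟨w, hw⟩ := hf u a l hl
    obtain ⟨x, p, hx, hp⟩ := ih w hw hs
    have hadj : G.Adj u w := f.map_adj_iff.mp (wordTree_adj.mpr (.inr ⟨a, hw ▸ hl⟩))
    refine ⟨x, .cons hadj p, hx, ?_⟩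
    have := hs.length_le
    simp only [Walk.length_cons, hp, List.length_cons]
    omega

variable [DecidableEq β]

def wordTreeDist (l l' : List β) : ℕ :=
  l.length + l'.length - 2 * l.commonSuffixLength l'

theorem wordTreeDist_le_of_adj {l w : List β} (h : (wordTree β).Adj l w) (v : List β) :
    wordTreeDist l v ≤ wordTreeDist w v + 1 := by
  suffices ∀ (a : β) (l : List β), wordTreeDist l v ≤ wordTreeDist (a :: l) v + 1 ∧
      wordTreeDist (a :: l) v ≤ wordTreeDist l v + 1 by
    rcases wordTree_adj.mp h with ⟨a, rfl⟩ | ⟨a, rfl⟩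
    exacts [(this a l).1, (this a w).2]
  intro a l
  have := List.commonSuffixLength_le_cons a l v
  have := List.commonSuffixLength_cons_le a l v
  have := List.commonSuffixLength_le_length_left l v
  have := List.commonSuffixLength_le_length_right l v
  simp only [wordTreeDist, List.length_cons]
  omega

theorem wordTreeDist_le_length {l l' : List β} (p : (wordTree β).Walk l l') :
    wordTreeDist l l' ≤ p.length := by
  induction p with
  | nil => simp only [wordTreeDist, List.commonSuffixLength_self]; omega
  | cons h _ ih => simpa [Walk.length_cons] using (wordTreeDist_le_of_adj h _).trans (by omega)

theorem dist_eq_wordTreeDist (f : G ↪g wordTree β)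
    (hf : ∀ u a l, f u = a :: l → ∃ w, f w = l) (u v : V) :
    G.dist u v = wordTreeDist (f u) (f v) := by
  obtain ⟨s, hsu, hsv, hlen⟩ := List.exists_suffix_length_eq_commonSuffixLength (f u) (f v)
  obtain ⟨w, p, hw, hp⟩ := exists_walk_of_suffix f hf u hsu
  obtain ⟨w', q, hw', hq⟩ := exists_walk_of_suffix f hf v hsv
  obtain rfl : w = w' := f.injective (hw.trans hw'.symm)
  apply le_antisymm
  · have := hsu.length_le
    have := hsv.length_le
    calc G.dist u v ≤ (p.append q.reverse).length := dist_le _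
      _ = wordTreeDist (f u) (f v) := by
        simp only [Walk.length_append, Walk.length_reverse, hp, hq, wordTreeDist]
        omega
  · obtain ⟨r, hr⟩ := (p.append q.reverse).reachable.exists_walk_length_eq_dist
    rw [← hr, ← Walk.length_map f.toHom r]
    exact wordTreeDist_le_length _

end SimpleGraph

open SimpleGraph in
theorem wienerIndex_eq_of_embedding_wordTree {V β : Type} [Fintype V] [DecidableEq β]
    {G : SimpleGraph V} (f : G ↪g wordTree β) (hf : ∀ u a l, f u = a :: l → ∃ w, f w = l) :
    (wienerIndex G : ℚ) = (Fintype.card V * ∑ u, (f u).length : ℕ)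
      - (∑ u, ∑ v, (f u).commonSuffixLength (f v) : ℕ) := by
  have hsum : ∑ u, ∑ v, G.dist u v =
      2 * ∑ u, ∑ v, ((f u).length - (f u).commonSuffixLength (f v)) := by
    have hsplit (u v : V) : G.dist u v = ((f u).length - (f u).commonSuffixLength (f v)) +
        ((f v).length - (f v).commonSuffixLength (f u)) := by
      have := (f u).commonSuffixLength_le_length_left (f v)
      have := (f u).commonSuffixLength_le_length_right (f v)
      rw [dist_eq_wordTreeDist f hf, wordTreeDist, List.commonSuffixLength_comm (f v)]
      omega
    simp only [hsplit, Finset.sum_add_distrib]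
    rw [Finset.sum_comm (f := fun u v => (f v).length - (f v).commonSuffixLength (f u))]
    ring
  unfold wienerIndex
  rw [Subsingleton.elim (Fintype.ofFinite V) ‹_›, hsum, Nat.mul_div_cancel_left _ two_pos]
  push_cast [List.commonSuffixLength_le_length_left, Finset.sum_sub_distrib]
  simp [Finset.mul_sum]

namespace CayleyVertex

open SimpleGraph

variable {n t : ℕ}

/-- A vertex as its path up to the root, so that the parent of `a :: w` is `w`; the branch
index comes last. -/
def toWord : CayleyVertex n t → List (Fin n ⊕ Fin (n - 1))
  | Sum.inl _ => []
  | Sum.inr (i, l) => l.1.map Sum.inr ++ [Sum.inl i]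

theorem toWord_injective : Function.Injective (toWord : CayleyVertex n t → _) := by
  rintro (_ | ⟨i, l⟩) (_ | ⟨j, s⟩) h <;> simp [toWord] at h
  · rfl
  · obtain ⟨h, rfl⟩ := h
    rw [Subtype.ext (List.map_injective_iff.mpr Sum.inr_injective h)]

theorem exists_toWord_eq_cons_iff (u v : CayleyVertex n t) :
    (∃ c, toWord v = c :: toWord u) ↔
      match u, v with
      | Sum.inl _, Sum.inr (_, l) => l.1 = []
      | Sum.inr (i, l), Sum.inr (i', l') => i = i' ∧ ∃ a : Fin (n - 1), l'.1 = a :: l.1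
      | _, _ => False := by
  rcases u with _ | ⟨i, l⟩ <;> rcases v with _ | ⟨j, ⟨_ | ⟨b, s⟩, hs⟩⟩ <;>
    simp [toWord, (List.map_injective_iff.mpr Sum.inr_injective).eq_iff]
  tauto

def toWordEmbedding : cayleyTree n t ↪g wordTree (Fin n ⊕ Fin (n - 1)) where
  toFun := toWord
  inj' := toWord_injective
  map_rel_iff' {u v} := by
    rw [cayleyTree, fromRel_adj, ← exists_toWord_eq_cons_iff, ← exists_toWord_eq_cons_iff,
      ← wordTree_adj]
    exact (and_iff_right_of_imp fun (h : (wordTree _).Adj (toWord u) (toWord v)) =>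
      ne_of_apply_ne toWord h.ne).symm

@[simp]
theorem coe_toWordEmbedding : ⇑(toWordEmbedding : cayleyTree n t ↪g _) = toWord :=
  rfl

theorem exists_toWord_eq_of_toWord_eq_cons (u : CayleyVertex n t) {a l}
    (h : toWord u = a :: l) : ∃ w : CayleyVertex n t, toWord w = l := by
  rcases u with _ | ⟨i, ⟨_ | ⟨b, s⟩, hs⟩⟩
  · simp [toWord] at h
  · simp only [toWord, List.map_nil, List.nil_append, List.cons.injEq] at h
    exact ⟨Sum.inl (), h.2⟩
  · refine ⟨Sum.inr (i, ⟨s, (Nat.le_succ _).trans hs⟩), ?_⟩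
    simp_all [toWord]

noncomputable instance : Fintype (CayleyVertex n t) :=
  inferInstanceAs (Fintype (Unit ⊕ (Fin n × {l : List (Fin (n - 1)) // l.length ≤ t - 1})))

theorem sum_eq_root_add {M : Type*} [AddCommMonoid M] (g : CayleyVertex n t → M) :
    ∑ u, g u = g (Sum.inl ()) + ∑ i, ∑ l, g (Sum.inr (i, l)) := by
  rw [← Fintype.sum_prod_type']
  exact Fintype.sum_sum_type g |>.trans (by simp)

theorem card_eq : Fintype.card (CayleyVertex n t) =
    1 + n * Fintype.card {l : List (Fin (n - 1)) // l.length ≤ t - 1} := by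
  rw [Fintype.card_eq_sum_ones, sum_eq_root_add]
  simp

theorem sum_length_toWord : ∑ u : CayleyVertex n t, (toWord u).length =
    n * (∑ l : {l : List (Fin (n - 1)) // l.length ≤ t - 1}, l.1.length
      + Fintype.card {l : List (Fin (n - 1)) // l.length ≤ t - 1}) := by
  simp [sum_eq_root_add, toWord, Finset.sum_add_distrib]

theorem sum_commonSuffixLength_toWord :
    ∑ u : CayleyVertex n t, ∑ v : CayleyVertex n t, (toWord u).commonSuffixLength (toWord v) =
      n * (∑ l : {l : List (Fin (n - 1)) // l.length ≤ t - 1},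
          ∑ l' : {l : List (Fin (n - 1)) // l.length ≤ t - 1}, l.1.commonPrefixLength l'.1
        + Fintype.card {l : List (Fin (n - 1)) // l.length ≤ t - 1} ^ 2) := by
  simp [sum_eq_root_add, toWord, List.commonSuffixLength_map Sum.inr_injective, Finset.sum_ite_eq,
    Finset.sum_add_distrib, List.sum_commonSuffixLength_lengthLE, sq]

end CayleyVertex

/-- For `n ≥ 3` and `t ≥ 1`, the Wiener index of the Cayley tree `C(t,n)` equals
`n(n−1)^{t−1} + (n(t−1)(n−1)^{t+1} − n(n−1)^{t−1} + n)/(n−2)²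
 + (n((n−2)t − n)(n−1)^{2t} + 2n(n−1)^{t+1})/(n−2)³
 + (n(n−1)/(n−2)³)·(((n−2)t − 1)(n−1)^{2t} − ((n−2)t − 2)(n−1)^t − 1)`. -/
theorem wiener_cayleyTree (n t : ℕ) (hn : 3 ≤ n) (ht : 1 ≤ t) :
    (wienerIndex (cayleyTree n t) : ℚ) =
      (n : ℚ) * ((n : ℚ) - 1) ^ (t - 1)
        + ((n : ℚ) * ((t : ℚ) - 1) * ((n : ℚ) - 1) ^ (t + 1)
            - (n : ℚ) * ((n : ℚ) - 1) ^ (t - 1) + (n : ℚ)) / ((n : ℚ) - 2) ^ 2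
        + ((n : ℚ) * (((n : ℚ) - 2) * t - (n : ℚ)) * ((n : ℚ) - 1) ^ (2 * t)
            + 2 * (n : ℚ) * ((n : ℚ) - 1) ^ (t + 1)) / ((n : ℚ) - 2) ^ 3
        + ((n : ℚ) * ((n : ℚ) - 1) / ((n : ℚ) - 2) ^ 3) *
            ((((n : ℚ) - 2) * t - 1) * ((n : ℚ) - 1) ^ (2 * t)
              - (((n : ℚ) - 2) * t - 2) * ((n : ℚ) - 1) ^ t - 1) := by
  obtain ⟨m, rfl⟩ : ∃ m, t = m + 1 := ⟨t - 1, by omega⟩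
  have hk : (Fintype.card (Fin (n - 1)) : ℚ) - 1 = n - 2 := by
    rw [Fintype.card_fin, Nat.cast_sub (by omega)]
    ring
  have hn2 : (n : ℚ) - 2 ≠ 0 := by
    rw [sub_ne_zero]
    exact_mod_cast (by omega : n ≠ 2)
  have hP := List.sub_one_mul_card_lengthLE (α := Fin (n - 1)) m
  have hL := List.sub_one_sq_mul_sum_length_lengthLE (α := Fin (n - 1)) m
  have hC := List.sub_one_pow_three_mul_sum_commonPrefixLength_lengthLE (α := Fin (n - 1)) m
  rw [hk, Fintype.card_fin, Nat.cast_sub (by omega : 1 ≤ n), Nat.cast_one] at hP hL hC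
  rw [mul_comm, ← eq_div_iff hn2] at hP
  rw [mul_comm, ← eq_div_iff (pow_ne_zero _ hn2)] at hL hC
  rw [wienerIndex_eq_of_embedding_wordTree CayleyVertex.toWordEmbedding
      fun u _ _ => CayleyVertex.exists_toWord_eq_of_toWord_eq_cons u,
    CayleyVertex.coe_toWordEmbedding, CayleyVertex.card_eq, CayleyVertex.sum_length_toWord,
    CayleyVertex.sum_commonSuffixLength_toWord, Nat.add_sub_cancel]
  simp only [Nat.cast_mul, Nat.cast_add, Nat.cast_one, Nat.cast_pow, hP, hL, hC]
  field_simp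
  ring
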